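/- Let p ≥ 2 and let S_t := c · ∑_{ν≥0} λ(ν)λ(ν+t) p^{-ν} for t ≥ 0, where λ(ν) = (α^{ν+1}−β^{ν+1})/(α−β), αβ=1, |α|,|β| < p^{1/2}, and c any nonzero constant. Then S_t = λ(1)·S_{t−1} − S_{t−2} for all t ≥ 2, and S_1 = (λ(1)/(1+p⁻¹))·S_0. -/

import Mathlib

/-!
Since `αβ = 1`, the sequence `λ` satisfies the three-term recurrence
`λ(m+2) = λ(1) λ(m+1) − λ(m)` with `λ(0) = 1`; multiplying the series for `S_t` termwise
by this recurrence gives the recurrence for `t ≥ 2`. For `t = 1` one instead applies the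
recurrence to the left factor `λ(ν+1)` of `λ(1) S_0`: after shifting the summation index
this produces `S_1 + p⁻¹ S_1`. Absolute convergence holds because `λ(ν) λ(ν+t) p^{-ν}` is a
combination of four geometric sequences with ratios `xy/p`, `x, y ∈ {α, β}`, of norm `< 1`.
-/

open Complex

theorem norm_mul_mul_inv_lt_one {x y : ℂ} {p : ℝ} (hx : ‖x‖ < √p) (hy : ‖y‖ < √p) :
    ‖x * y * (p : ℂ)⁻¹‖ < 1 := by
  have hp : 0 < p := Real.sqrt_pos.mp ((norm_nonneg x).trans_lt hx)
  have hxy : ‖x‖ * ‖y‖ < p := by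
    calc ‖x‖ * ‖y‖ < √p * √p := mul_lt_mul'' hx hy (norm_nonneg x) (norm_nonneg y)
      _ = p := Real.mul_self_sqrt hp.le
  rw [norm_mul, norm_mul, norm_inv, norm_real, Real.norm_of_nonneg hp.le]
  rwa [← div_eq_mul_inv, div_lt_one hp]

theorem summable_pow_add_mul_pow_add_mul_pow {K : Type*} [NormedField K] [CompleteSpace K]
    {x y q : K} (h : ‖x * y * q‖ < 1) (a b : ℕ) :
    Summable fun ν : ℕ => x ^ (ν + a) * y ^ (ν + b) * q ^ ν := by
  have hgeom := (summable_geometric_of_norm_lt_one h).mul_left (x ^ a * y ^ b)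
  refine hgeom.congr fun ν => ?_
  ring

noncomputable def powDiffQuot (α β : ℂ) (n : ℕ) : ℂ := (α ^ (n + 1) - β ^ (n + 1)) / (α - β)

section PowDiffQuot

variable {α β : ℂ}

theorem powDiffQuot_zero (hne : α ≠ β) : powDiffQuot α β 0 = 1 := by
  simp [powDiffQuot, div_self (sub_ne_zero.mpr hne)]

theorem powDiffQuot_add_two (hne : α ≠ β) (hαβ : α * β = 1) (m : ℕ) :
    powDiffQuot α β (m + 2) = powDiffQuot α β 1 * powDiffQuot α β (m + 1) - powDiffQuot α β m := by
  have hsub : α - β ≠ 0 := sub_ne_zero.mpr hne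
  simp only [powDiffQuot]
  field_simp
  linear_combination (β ^ (m + 1) - α ^ (m + 1)) * (α - β) * hαβ

theorem summable_powDiffQuot_mul_powDiffQuot_mul_pow {p : ℝ} (hα : ‖α‖ < √p) (hβ : ‖β‖ < √p)
    (t : ℕ) :
    Summable fun ν : ℕ => powDiffQuot α β ν * powDiffQuot α β (ν + t) * ((p : ℂ)⁻¹) ^ ν := by
  have geom {x y : ℂ} (hx : ‖x‖ < √p) (hy : ‖y‖ < √p) :=
    summable_pow_add_mul_pow_add_mul_pow (norm_mul_mul_inv_lt_one hx hy) 1 (t + 1)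
  have hsum := ((((geom hα hα).sub (geom hα hβ)).sub (geom hβ hα)).add
    (geom hβ hβ)).div_const (α - β) |>.div_const (α - β)
  refine hsum.congr fun ν => ?_
  simp only [powDiffQuot]
  ring

end PowDiffQuot

section ShiftedSeries

variable {K : Type*} [Field K] [TopologicalSpace K] [IsTopologicalRing K] [T2Space K]
  {u : ℕ → K} {q : K}

theorem tsum_mul_shift_add_two (hu : ∀ m, u (m + 2) = u 1 * u (m + 1) - u m) (t : ℕ)
    (hs₁ : Summable fun ν => u ν * u (ν + (t + 1)) * q ^ ν)
    (hs₀ : Summable fun ν => u ν * u (ν + t) * q ^ ν) :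
    ∑' ν, u ν * u (ν + (t + 2)) * q ^ ν =
      u 1 * ∑' ν, u ν * u (ν + (t + 1)) * q ^ ν - ∑' ν, u ν * u (ν + t) * q ^ ν := by
  have hterm (ν : ℕ) : u ν * u (ν + (t + 2)) * q ^ ν =
      u 1 * (u ν * u (ν + (t + 1)) * q ^ ν) - u ν * u (ν + t) * q ^ ν := by
    rw [← add_assoc, ← add_assoc, hu (ν + t)]
    ring
  rw [tsum_congr hterm, (hs₁.mul_left (u 1)).tsum_sub hs₀, tsum_mul_left]

theorem mul_tsum_mul_self (hu : ∀ m, u (m + 2) = u 1 * u (m + 1) - u m) (hu₀ : u 0 = 1)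
    (hs₁ : Summable fun ν => u ν * u (ν + 1) * q ^ ν)
    (hs₀ : Summable fun ν => u ν * u ν * q ^ ν) :
    u 1 * ∑' ν, u ν * u ν * q ^ ν = (1 + q) * ∑' ν, u ν * u (ν + 1) * q ^ ν := by
  set A := ∑' ν, u ν * u (ν + 1) * q ^ ν
  -- the recurrence `u 1 * u (ν + 1) = u (ν + 2) + u ν` splits each shifted term in two
  have hterm (ν : ℕ) : u 1 * (u (ν + 1) * u (ν + 1) * q ^ (ν + 1)) =
      u (ν + 1) * u (ν + 1 + 1) * q ^ (ν + 1) + q * (u ν * u (ν + 1) * q ^ ν) := by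
    rw [add_assoc, hu ν]
    ring
  have hshift : ∑' ν, u (ν + 1) * u (ν + 1 + 1) * q ^ (ν + 1) = A - u 1 := by
    rw [show A = _ from hs₁.tsum_eq_zero_add, hu₀]
    ring
  calc u 1 * ∑' ν, u ν * u ν * q ^ ν
      = u 1 * (u 0 * u 0 * q ^ 0) + ∑' ν, u 1 * (u (ν + 1) * u (ν + 1) * q ^ (ν + 1)) := by
        rw [← tsum_mul_left, (hs₀.mul_left (u 1)).tsum_eq_zero_add]
    _ = u 1 + ((A - u 1) + q * A) := by
        rw [tsum_congr hterm, ((summable_nat_add_iff 1).mpr hs₁).tsum_add (hs₁.mul_left q),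
          hshift, tsum_mul_left, hu₀]
        ring
    _ = (1 + q) * A := by ring

end ShiftedSeries

theorem S_recurrence_general (p : ℝ) (α β : ℂ) (hαβ : α * β = 1) (hne : α ≠ β)
    (hα : ‖α‖ < Real.sqrt p) (hβ : ‖β‖ < Real.sqrt p)
    (c : ℂ) :
    let lam : ℕ → ℂ := fun ν => (α ^ (ν + 1) - β ^ (ν + 1)) / (α - β)
    let S : ℕ → ℂ := fun t => c * ∑' ν : ℕ, lam ν * lam (ν + t) * ((p : ℂ)⁻¹) ^ ν
    (∀ t : ℕ, 2 ≤ t → S t = lam 1 * S (t - 1) - S (t - 2)) ∧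
      S 1 = (lam 1 / (1 + (p : ℂ)⁻¹)) * S 0 := by
  intro lam S
  have hrec : ∀ m, lam (m + 2) = lam 1 * lam (m + 1) - lam m := powDiffQuot_add_two hne hαβ
  have hsum : ∀ t, Summable fun ν => lam ν * lam (ν + t) * ((p : ℂ)⁻¹) ^ ν :=
    summable_powDiffQuot_mul_powDiffQuot_mul_pow hα hβ
  constructor
  · rintro t ht
    obtain ⟨s, rfl⟩ : ∃ s, t = s + 2 := ⟨t - 2, by omega⟩
    simp only [S, Nat.add_sub_cancel, show s + 2 - 1 = s + 1 by omega,
      tsum_mul_shift_add_two hrec s (hsum (s + 1)) (hsum s)]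
    ring
  · have hp : 0 < p := Real.sqrt_pos.mp ((norm_nonneg α).trans_lt hα)
    have hq : (1 : ℂ) + (p : ℂ)⁻¹ ≠ 0 := by exact_mod_cast (by positivity : (1 : ℝ) + p⁻¹ ≠ 0)
    have hmain := mul_tsum_mul_self hrec (powDiffQuot_zero hne) (hsum 1) (hsum 0)
    simp only [S, Nat.add_zero]
    rw [div_mul_eq_mul_div, eq_div_iff hq]
    linear_combination (-c) * hmain

/-- Recurrence for the inner-product series `S_t = c·∑_{ν≥0} λ(ν)λ(ν+t)p^{-ν}` with
Hecke eigenvalues `λ(ν) = (α^{ν+1}−β^{ν+1})/(α−β)`, `αβ = 1`, `|α|,|β| < √p`: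
`S_t = λ(1)·S_{t−1} − S_{t−2}` for `t ≥ 2`, and `S_1 = (λ(1)/(1+p⁻¹))·S_0`. -/
theorem S_recurrence (p : ℝ) (hp : 1 < p) (α β : ℂ) (hαβ : α * β = 1) (hne : α ≠ β)
    (hα : ‖α‖ < Real.sqrt p) (hβ : ‖β‖ < Real.sqrt p)
    (c : ℂ) (hc : c ≠ 0) :
    let lam : ℕ → ℂ := fun ν => (α ^ (ν + 1) - β ^ (ν + 1)) / (α - β)
    let S : ℕ → ℂ := fun t => c * ∑' ν : ℕ, lam ν * lam (ν + t) * ((p : ℂ)⁻¹) ^ ν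
    (∀ t : ℕ, 2 ≤ t → S t = lam 1 * S (t - 1) - S (t - 2)) ∧
      S 1 = (lam 1 / (1 + (p : ℂ)⁻¹)) * S 0 :=
  S_recurrence_general p α β hαβ hne hα hβ c
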